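/- Let E be an effect algebra and S ⊆ E. If S ∪ {1} admits a compatibility support mapping, then S is coexistent: there exist a Boolean algebra B and an observable α : B → E such that S is contained in the range of α. -/

import Mathlib

universe u

/-- An effect algebra: a partial commutative, associative operation `add`
(modelled as an `Option`-valued total operation), with constants `zero`, `one`,
unique orthosupplements, and `a ⊕ 1` defined only for `a = 0`. -/
structure EffectAlgebra (α : Type u) where
  add : α → α → Option α
  zero : α
  one : α
  add_comm : ∀ a b : α, add a b = add b a
  add_assoc : ∀ a b c ab abc : α, add a b = some ab → add ab c = some abc →
    ∃ bc : α, add b c = some bc ∧ add a bc = some abc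
  orthosupp : ∀ a : α, ∃! a' : α, add a a' = some one
  add_one : ∀ a b : α, add a one = some b → a = zero

namespace EffectAlgebra

variable {α : Type u}

/-- The induced order: `a ≤ b` iff `∃ c, a ⊕ c = b`. -/
def le (E : EffectAlgebra α) (a b : α) : Prop := ∃ c, E.add a c = some b

/-- The orthosupplement `a'`. -/
noncomputable def compl (E : EffectAlgebra α) (a : α) : α :=
  (E.orthosupp a).exists.choose

open Classical in
/-- The partial difference `b ⊖ a` (junk value `0` when `a ≤ b` fails). -/
noncomputable def sub (E : EffectAlgebra α) (b a : α) : α :=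
  if h : ∃ c, E.add a c = some b then h.choose else E.zero

/-- Iterated partial sum of a list of elements. -/
noncomputable def osum (E : EffectAlgebra α) : List α → Option α
  | [] => some E.zero
  | a :: l => (E.osum l).bind fun s => E.add a s

end EffectAlgebra

namespace EffectAlgebra

variable {α : Type u}

/-- `f` is a compatibility support mapping for `S` (with `1 ∈ S`). -/
def IsCSM [DecidableEq α] (E : EffectAlgebra α) (S : Set α) (f : Finset α → Finset α → α) : Prop :=
  E.one ∈ S ∧
  (∀ U V₁ V₂ : Finset α, ↑U ⊆ S → ↑V₁ ⊆ S → ↑V₂ ⊆ S → V₁ ⊆ V₂ →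
    E.le (f U V₁) (f U V₂)) ∧
  (∀ U V : Finset α, ↑U ⊆ S → ↑V ⊆ S → E.le (f U V) (f U {E.one})) ∧
  (∀ U : Finset α, ↑U ⊆ S → f U ∅ = E.zero) ∧
  (∀ c ∈ S, f ∅ {c} = c) ∧
  (∀ (U V : Finset α) (c : α), ↑U ⊆ S → ↑V ⊆ S → c ∈ S → c ∉ U → c ∉ V →
    E.sub (f (insert c U) {E.one}) (f (insert c U) V) =
      E.sub (f U (insert c V)) (f U V))

/-- `f` is a strong compatibility support mapping for `S`:
condition (e*) holds with no restriction on `c`. -/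
def IsStrongCSM [DecidableEq α] (E : EffectAlgebra α) (S : Set α) (f : Finset α → Finset α → α) : Prop :=
  E.one ∈ S ∧
  (∀ U V₁ V₂ : Finset α, ↑U ⊆ S → ↑V₁ ⊆ S → ↑V₂ ⊆ S → V₁ ⊆ V₂ →
    E.le (f U V₁) (f U V₂)) ∧
  (∀ U V : Finset α, ↑U ⊆ S → ↑V ⊆ S → E.le (f U V) (f U {E.one})) ∧
  (∀ U : Finset α, ↑U ⊆ S → f U ∅ = E.zero) ∧
  (∀ c ∈ S, f ∅ {c} = c) ∧
  (∀ (U V : Finset α) (c : α), ↑U ⊆ S → ↑V ⊆ S → c ∈ S →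
    E.sub (f (insert c U) {E.one}) (f (insert c U) V) =
      E.sub (f U (insert c V)) (f U V))

/-- `D(X,A) = ⟨X|{1}⟩ ⊖ ⟨X|A∖X⟩`. -/
noncomputable def Dmap [DecidableEq α] (E : EffectAlgebra α)
    (f : Finset α → Finset α → α) (X A : Finset α) : α :=
  E.sub (f X {E.one}) (f X (A \ X))

end EffectAlgebra

namespace EffectAlgebra

/-- An observable: a map from a Boolean algebra to an effect algebra preserving
`0`, `1` and sending disjoint joins to orthogonal sums. -/
def IsObservable {α : Type u} (E : EffectAlgebra α) {B : Type u}
    [BooleanAlgebra B] (g : B → α) : Prop :=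
  g ⊥ = E.zero ∧ g ⊤ = E.one ∧
    ∀ x y : B, x ⊓ y = ⊥ → E.add (g x) (g y) = some (g (x ⊔ y))

end EffectAlgebra

/-!
Points of the sample space are sets `ω : Set α`, read as the coordinates `a ∈ S` that are
"on", and events are the sets of points that depend on finitely many coordinates. For a
finite `A ⊆ S`, condition (e) splits each `D(X, A) = ⟨X|{1}⟩ ⊖ ⟨X|A ∖ X⟩` (`X ⊆ A`) as
`D(X, A ∪ {c}) ⊕ D(X ∪ {c}, A ∪ {c})` when a coordinate `c` is added. By induction the
`D(X, A)` are therefore jointly orthogonal with sum `D(∅, ∅) = 1`, and the value of an event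
determined by `A`, the sum of `D(X, A)` over its points `X ⊆ A`, does not depend on `A`.
Additivity is that of finite sums, and `D({a}, {a}) = a` puts each `a ∈ S` in the range.
-/

namespace EffectAlgebra

variable {α : Type u} (E : EffectAlgebra α) {a b c d k : α}

lemma orthosupp_unique (hb : E.add a b = some E.one) (hc : E.add a c = some E.one) : b = c :=
  (E.orthosupp a).unique hb hc

lemma add_assoc' {bc t : α} (hbc : E.add b c = some bc) (ht : E.add a bc = some t) :
    ∃ ab, E.add a b = some ab ∧ E.add ab c = some t := by
  obtain ⟨ba, hba, hcba⟩ := E.add_assoc c b a bc t ((E.add_comm c b).trans hbc)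
    ((E.add_comm bc a).trans ht)
  exact ⟨ba, (E.add_comm a b).trans hba, (E.add_comm ba c).trans hcba⟩

lemma one_add_zero : E.add E.one E.zero = some E.one := by
  obtain ⟨z, hz, -⟩ := E.orthosupp E.one
  rwa [← E.add_one z E.one ((E.add_comm z E.one).trans hz)]

lemma zero_add (a : α) : E.add E.zero a = some a := by
  obtain ⟨a', ha', -⟩ := E.orthosupp a
  obtain ⟨t, ht, hat⟩ := E.add_assoc a' a E.zero E.one E.one
    ((E.add_comm a' a).trans ha') E.one_add_zero
  rw [E.add_comm, ht, E.orthosupp_unique ((E.add_comm a' a).trans ha') hat]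

lemma add_zero (a : α) : E.add a E.zero = some a :=
  (E.add_comm a E.zero).trans (E.zero_add a)

lemma add_right_cancel (hb : E.add b k = some d) (hc : E.add c k = some d) : b = c := by
  obtain ⟨d', hd', -⟩ := E.orthosupp d
  obtain ⟨u, hu, hbu⟩ := E.add_assoc b k d' d E.one hb hd'
  obtain ⟨u', hu', hcu⟩ := E.add_assoc c k d' d E.one hc hd'
  obtain rfl : u = u' := Option.some_inj.mp (hu.symm.trans hu')
  exact E.orthosupp_unique ((E.add_comm u b).trans hbu) ((E.add_comm u c).trans hcu)

lemma add_left_cancel (hb : E.add k b = some d) (hc : E.add k c = some d) : b = c :=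
  E.add_right_cancel ((E.add_comm b k).trans hb) ((E.add_comm c k).trans hc)

lemma sub_eq_of_add_eq (h : E.add a c = some b) : E.sub b a = c := by
  have hex : ∃ x, E.add a x = some b := ⟨c, h⟩
  rw [sub, dif_pos hex]
  exact E.add_left_cancel hex.choose_spec h

lemma add_sub_of_le (h : E.le a b) : E.add a (E.sub b a) = some b := by
  obtain ⟨c, hc⟩ := h
  rwa [E.sub_eq_of_add_eq hc]

lemma sub_zero (a : α) : E.sub a E.zero = a :=
  E.sub_eq_of_add_eq (E.zero_add a)

lemma sub_add_sub (hab : E.le a b) (hbc : E.le b c) :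
    E.add (E.sub c b) (E.sub b a) = some (E.sub c a) := by
  obtain ⟨t, ht, hat⟩ := E.add_assoc a (E.sub b a) (E.sub c b) b c
    (E.add_sub_of_le hab) (E.add_sub_of_le hbc)
  rwa [E.add_comm, E.sub_eq_of_add_eq hat]

def addOption (x y : Option α) : Option α :=
  x.bind fun a => y.bind (E.add a)

lemma bind_add_assoc (a b c : α) :
    ((E.add a b).bind fun ab => E.add ab c) = (E.add b c).bind (E.add a) := by
  refine Option.ext fun t => ?_
  simp only [Option.bind_eq_some_iff]
  constructor
  · rintro ⟨ab, hab, ht⟩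
    exact E.add_assoc a b c ab t hab ht
  · rintro ⟨bc, hbc, ht⟩
    exact E.add_assoc' hbc ht

/-- Orthogonal sums as a total commutative monoid on `Option α`, `none` standing for
"undefined". -/
abbrev optionAddCommMonoid : AddCommMonoid (Option α) where
  add := E.addOption
  zero := some E.zero
  add_assoc x y z := by
    change E.addOption (E.addOption x y) z = E.addOption x (E.addOption y z)
    rcases x with _ | a <;> rcases y with _ | b <;> rcases z with _ | c <;>
      simp [addOption, E.bind_add_assoc]
  zero_add x := by
    change E.addOption (some E.zero) x = x
    cases x <;> simp [addOption, E.zero_add]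
  add_zero x := by
    change E.addOption x (some E.zero) = x
    cases x <;> simp [addOption, E.add_zero]
  add_comm x y := by
    change E.addOption x y = E.addOption y x
    cases x <;> cases y <;> simp [addOption, E.add_comm]
  nsmul := @nsmulRec _ ⟨some E.zero⟩ ⟨E.addOption⟩
  nsmul_zero _ := rfl
  nsmul_succ _ _ := rfl

section PartialSum

variable {β : Type*}

def psum (s : Finset β) (g : β → α) : Option α :=
  letI := E.optionAddCommMonoid
  ∑ x ∈ s, some (g x)

lemma psum_empty (g : β → α) : E.psum ∅ g = some E.zero := rfl

lemma psum_singleton (g : β → α) (x : β) : E.psum {x} g = some (g x) :=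
  letI := E.optionAddCommMonoid
  Finset.sum_singleton _ x

variable {s t : Finset β} {g g' h : β → α}

lemma addOption_psum_psum (hgh : ∀ x ∈ s, E.add (g x) (g' x) = some (h x)) :
    E.addOption (E.psum s g) (E.psum s g') = E.psum s h := by
  let := E.optionAddCommMonoid
  exact Finset.sum_add_distrib.symm.trans (Finset.sum_congr rfl hgh)

variable [DecidableEq β]

lemma psum_union (hst : Disjoint s t) :
    E.psum (s ∪ t) g = E.addOption (E.psum s g) (E.psum t g) :=
  letI := E.optionAddCommMonoid
  Finset.sum_union hst

lemma psum_image {i : β → β} (hi : Set.InjOn i s) :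
    E.psum (s.image i) g = E.psum s (g ∘ i) :=
  letI := E.optionAddCommMonoid
  Finset.sum_image hi

lemma exists_psum_eq_some_of_subset (hst : s ⊆ t) {v : α} (ht : E.psum t g = some v) :
    ∃ u, E.psum s g = some u := by
  rw [← Finset.union_sdiff_of_subset hst, E.psum_union Finset.disjoint_sdiff] at ht
  cases hs : E.psum s g with
  | none => simp [hs, addOption] at ht
  | some u => exact ⟨u, rfl⟩

end PartialSum

end EffectAlgebra

namespace EffectAlgebra.IsCSM

variable {α : Type u} [DecidableEq α] {E : EffectAlgebra α} {S : Set α}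
  {f : Finset α → Finset α → α} {A X : Finset α} {c : α}

lemma Dmap_add_Dmap_insert (hf : E.IsCSM S f) (hA : ↑A ⊆ S) (hX : X ⊆ A) (hc : c ∈ S)
    (hcA : c ∉ A) :
    E.add (E.Dmap f X (insert c A)) (E.Dmap f (insert c X) (insert c A)) =
      some (E.Dmap f X A) := by
  obtain ⟨-, hmono, hle_one, -, -, hsupp⟩ := hf
  have hXS : ↑X ⊆ S := (Finset.coe_subset.2 hX).trans hA
  have hVS : ↑(A \ X) ⊆ S := (Finset.coe_subset.2 Finset.sdiff_subset).trans hA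
  have hcVS : ↑(insert c (A \ X)) ⊆ S := by
    rw [Finset.coe_insert]; exact Set.insert_subset hc hVS
  have hcX : c ∉ X := fun h => hcA (hX h)
  have hsupp' := hsupp X (A \ X) c hXS hVS hc hcX fun h => hcA (Finset.sdiff_subset h)
  rw [Dmap, Dmap, Dmap, Finset.insert_sdiff_of_notMem A hcX, Finset.insert_sdiff_insert,
    Finset.sdiff_insert_of_notMem hcA, hsupp']
  exact E.sub_add_sub (hmono _ _ _ hXS hVS hcVS (Finset.subset_insert c _))
    (hle_one _ _ hXS hcVS)

lemma Dmap_empty_empty (hf : E.IsCSM S f) : E.Dmap f ∅ ∅ = E.one := by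
  obtain ⟨hone, -, -, hzero, hsingle, -⟩ := hf
  rw [Dmap, Finset.sdiff_self, hzero ∅ (by simp), E.sub_zero, hsingle E.one hone]

lemma Dmap_singleton_singleton (hf : E.IsCSM S f) {a : α} (ha : a ∈ S) :
    E.Dmap f {a} {a} = a := by
  obtain ⟨-, -, -, hzero, hsingle, hsupp⟩ := hf
  have h := hsupp ∅ ∅ a (by simp) (by simp) ha (Finset.notMem_empty a) (Finset.notMem_empty a)
  rw [insert_empty_eq, hzero {a} (by simpa using ha), hzero ∅ (by simp), hsingle a ha,
    E.sub_zero, E.sub_zero] at h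
  rw [Dmap, Finset.sdiff_self, hzero {a} (by simpa using ha), E.sub_zero, h]

lemma psum_Dmap_insert (hf : E.IsCSM S f) (hA : ↑A ⊆ S) (hc : c ∈ S) (hcA : c ∉ A)
    {T : Finset (Finset α)} (hT : T ⊆ A.powerset) :
    E.psum (T ∪ T.image (insert c)) (fun X => E.Dmap f X (insert c A)) =
      E.psum T (fun X => E.Dmap f X A) := by
  have hcT : ∀ X ∈ T, c ∉ X := fun X hX hcX => hcA (Finset.mem_powerset.1 (hT hX) hcX)
  have hdisj : Disjoint T (T.image (insert c)) := Finset.disjoint_left.2 fun X hX hX' => by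
    obtain ⟨Y, -, rfl⟩ := Finset.mem_image.1 hX'
    exact hcT _ hX (Finset.mem_insert_self c Y)
  rw [E.psum_union hdisj, E.psum_image (Finset.insert_erase_invOn.2.injOn.mono hcT)]
  exact E.addOption_psum_psum fun X hX =>
    hf.Dmap_add_Dmap_insert hA (Finset.mem_powerset.1 (hT hX)) hc hcA

lemma psum_powerset_Dmap (hf : E.IsCSM S f) (hA : ↑A ⊆ S) :
    E.psum A.powerset (fun X => E.Dmap f X A) = some E.one := by
  induction A using Finset.induction_on with
  | empty => rw [Finset.powerset_empty, psum_singleton, hf.Dmap_empty_empty]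
  | insert c A hcA ih =>
    rw [Finset.coe_insert, Set.insert_subset_iff] at hA
    rw [Finset.powerset_insert, hf.psum_Dmap_insert hA.2 hA.1 hcA subset_rfl, ih hA.2]

end EffectAlgebra.IsCSM

section Events

variable {α : Type u} {A A' : Finset α} {b b' : Set (Set α)}

def DeterminedBy (A : Finset α) (b : Set (Set α)) : Prop :=
  ∀ ω ω' : Set α, (∀ a ∈ A, a ∈ ω ↔ a ∈ ω') → (ω ∈ b ↔ ω' ∈ b)

lemma DeterminedBy.mono (hAA' : A ⊆ A') (hb : DeterminedBy A b) : DeterminedBy A' b :=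
  fun ω ω' h => hb ω ω' fun a ha => h a (hAA' ha)

lemma DeterminedBy.compl (hb : DeterminedBy A b) : DeterminedBy A bᶜ :=
  fun ω ω' hω => (hb ω ω' hω).not

open Classical in
noncomputable def pointsOf (A : Finset α) (b : Set (Set α)) : Finset (Finset α) :=
  A.powerset.filter fun X => (X : Set α) ∈ b

lemma pointsOf_subset_powerset : pointsOf A b ⊆ A.powerset := by
  classical
  exact Finset.filter_subset _ _

lemma pointsOf_empty : pointsOf A (∅ : Set (Set α)) = ∅ := by
  simp [pointsOf]

lemma pointsOf_univ : pointsOf A (Set.univ : Set (Set α)) = A.powerset := by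
  simp [pointsOf]

lemma pointsOf_singleton (a : α) : pointsOf {a} {ω | a ∈ ω} = {{a}} := by
  ext X
  simp only [pointsOf, Finset.mem_filter, Finset.mem_powerset, Finset.mem_singleton,
    Set.mem_ofPred_eq, Finset.mem_coe]
  exact ⟨fun ⟨hX, ha⟩ => hX.antisymm (Finset.singleton_subset_iff.2 ha),
    fun hX => ⟨hX.le, hX ▸ Finset.mem_singleton_self a⟩⟩

lemma disjoint_pointsOf (hbb' : Disjoint b b') : Disjoint (pointsOf A b) (pointsOf A b') := by
  classical
  exact Finset.disjoint_left.2 fun _ hX hX' =>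
    Set.disjoint_left.1 hbb' (Finset.mem_filter.1 hX).2 (Finset.mem_filter.1 hX').2

variable [DecidableEq α]

lemma DeterminedBy.union (hb : DeterminedBy A b) (hb' : DeterminedBy A' b') :
    DeterminedBy (A ∪ A') (b ∪ b') := fun ω ω' hω =>
  or_congr (hb.mono Finset.subset_union_left ω ω' hω)
    (hb'.mono Finset.subset_union_right ω ω' hω)

lemma DeterminedBy.inter (hb : DeterminedBy A b) (hb' : DeterminedBy A' b') :
    DeterminedBy (A ∪ A') (b ∩ b') := fun ω ω' hω =>
  and_congr (hb.mono Finset.subset_union_left ω ω' hω)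
    (hb'.mono Finset.subset_union_right ω ω' hω)

def finitelyDetermined (S : Set α) : BooleanSubalgebra (Set (Set α)) where
  carrier := {b | ∃ A : Finset α, ↑A ⊆ S ∧ DeterminedBy A b}
  supClosed' := by
    rintro b ⟨A, hA, hb⟩ b' ⟨A', hA', hb'⟩
    exact ⟨A ∪ A', by simp [hA, hA'], hb.union hb'⟩
  infClosed' := by
    rintro b ⟨A, hA, hb⟩ b' ⟨A', hA', hb'⟩
    exact ⟨A ∪ A', by simp [hA, hA'], hb.inter hb'⟩
  compl_mem' := by
    rintro b ⟨A, hA, hb⟩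
    exact ⟨A, hA, hb.compl⟩
  bot_mem' := ⟨∅, by simp, fun _ _ _ => Iff.rfl⟩

lemma mem_finitelyDetermined {S : Set α} :
    b ∈ finitelyDetermined S ↔ ∃ A : Finset α, ↑A ⊆ S ∧ DeterminedBy A b :=
  Iff.rfl

lemma pointsOf_union : pointsOf A (b ∪ b') = pointsOf A b ∪ pointsOf A b' := by
  ext X
  simp only [pointsOf, Finset.mem_union, Finset.mem_filter, Set.mem_union]
  tauto

lemma pointsOf_insert {c : α} (hcA : c ∉ A) (hb : DeterminedBy A b) :
    pointsOf (insert c A) b = pointsOf A b ∪ (pointsOf A b).image (insert c) := by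
  classical
  rw [pointsOf, Finset.powerset_insert, Finset.filter_union, Finset.filter_image]
  congr 2
  refine Finset.filter_congr fun X hX => (hb _ _ fun a ha => ?_).symm
  simp [ne_of_mem_of_not_mem ha hcA]

end Events

namespace EffectAlgebra

variable {α : Type u} [DecidableEq α] (E : EffectAlgebra α) (f : Finset α → Finset α → α)

-- The default `E.zero` never occurs for a CSM on a set containing `A` (`IsCSM.psum_pointsOf`).
noncomputable def valueOn (A : Finset α) (b : Set (Set α)) : α :=
  (E.psum (pointsOf A b) fun X => E.Dmap f X A).getD E.zero

lemma valueOn_empty (A : Finset α) : E.valueOn f A ∅ = E.zero := by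
  rw [valueOn, pointsOf_empty, psum_empty, Option.getD_some]

namespace IsCSM

variable {E f} {S : Set α} {A A' : Finset α} {b b' : Set (Set α)} (hf : E.IsCSM S f)
include hf

lemma psum_pointsOf (hA : ↑A ⊆ S) (b : Set (Set α)) :
    E.psum (pointsOf A b) (fun X => E.Dmap f X A) = some (E.valueOn f A b) := by
  obtain ⟨u, hu⟩ := E.exists_psum_eq_some_of_subset pointsOf_subset_powerset
    (hf.psum_powerset_Dmap hA)
  rw [valueOn, hu, Option.getD_some]

lemma valueOn_insert {c : α} (hA : ↑A ⊆ S) (hc : c ∈ S) (hcA : c ∉ A)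
    (hb : DeterminedBy A b) : E.valueOn f (insert c A) b = E.valueOn f A b := by
  rw [valueOn, valueOn, pointsOf_insert hcA hb,
    hf.psum_Dmap_insert hA hc hcA pointsOf_subset_powerset]

lemma valueOn_union (hA : ↑A ⊆ S) (hA' : ↑A' ⊆ S) (hb : DeterminedBy A b) :
    E.valueOn f (A ∪ A') b = E.valueOn f A b := by
  induction A' using Finset.induction_on with
  | empty => rw [Finset.union_empty]
  | insert c A' hcA' ih =>
    rw [Finset.coe_insert, Set.insert_subset_iff] at hA'
    rw [Finset.union_insert]
    by_cases hc : c ∈ A ∪ A'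
    · rw [Finset.insert_eq_of_mem hc, ih hA'.2]
    · rw [hf.valueOn_insert (by simp [hA, hA'.2]) hA'.1 hc (hb.mono Finset.subset_union_left),
        ih hA'.2]

lemma valueOn_eq_valueOn (hA : ↑A ⊆ S) (hA' : ↑A' ⊆ S) (hb : DeterminedBy A b)
    (hb' : DeterminedBy A' b) : E.valueOn f A b = E.valueOn f A' b := by
  rw [← hf.valueOn_union hA hA' hb, Finset.union_comm, hf.valueOn_union hA' hA hb']

lemma valueOn_univ (hA : ↑A ⊆ S) : E.valueOn f A Set.univ = E.one := by
  rw [valueOn, pointsOf_univ, hf.psum_powerset_Dmap hA, Option.getD_some]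

lemma add_valueOn (hA : ↑A ⊆ S) (hbb' : Disjoint b b') :
    E.add (E.valueOn f A b) (E.valueOn f A b') = some (E.valueOn f A (b ∪ b')) := by
  have h := hf.psum_pointsOf hA (b ∪ b')
  rwa [pointsOf_union, E.psum_union (disjoint_pointsOf hbb'), hf.psum_pointsOf hA,
    hf.psum_pointsOf hA] at h

lemma valueOn_singleton {a : α} (ha : a ∈ S) : E.valueOn f {a} {ω | a ∈ ω} = a := by
  rw [valueOn, pointsOf_singleton, psum_singleton, Option.getD_some,
    hf.Dmap_singleton_singleton ha]

end IsCSM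

noncomputable def observable (S : Set α) (b : finitelyDetermined S) : α :=
  E.valueOn f (mem_finitelyDetermined.1 b.2).choose b

namespace IsCSM

variable {E f} {S : Set α} (hf : E.IsCSM S f)
include hf

lemma observable_eq_valueOn {b : finitelyDetermined S} {A : Finset α} (hA : ↑A ⊆ S)
    (hb : DeterminedBy A b) : E.observable f S b = E.valueOn f A b :=
  have h := (mem_finitelyDetermined.1 b.2).choose_spec
  hf.valueOn_eq_valueOn h.1 hA h.2 hb

theorem isObservable_observable : E.IsObservable (E.observable f S) := by
  refine ⟨E.valueOn_empty f _,
    hf.valueOn_univ (mem_finitelyDetermined.1 (⊤ : finitelyDetermined S).2).choose_spec.1,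
    fun x y hxy => ?_⟩
  obtain ⟨A, hA, hx⟩ := mem_finitelyDetermined.1 x.2
  obtain ⟨A', hA', hy⟩ := mem_finitelyDetermined.1 y.2
  have hAA' : ↑(A ∪ A') ⊆ S := by simp [hA, hA']
  rw [hf.observable_eq_valueOn hAA' (hx.mono Finset.subset_union_left),
    hf.observable_eq_valueOn hAA' (hy.mono Finset.subset_union_right),
    hf.observable_eq_valueOn hAA' (hx.union hy)]
  exact hf.add_valueOn hAA' (disjoint_iff.2 (congrArg Subtype.val hxy))

lemma mem_range_observable {a : α} (ha : a ∈ S) : a ∈ Set.range (E.observable f S) := by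
  have hdet : DeterminedBy {a} {ω | a ∈ ω} := fun ω ω' h => h a (Finset.mem_singleton_self a)
  have haS : ↑({a} : Finset α) ⊆ S := by simpa using ha
  exact ⟨⟨_, ⟨{a}, haS, hdet⟩⟩,
    (hf.observable_eq_valueOn haS hdet).trans (hf.valueOn_singleton ha)⟩

end IsCSM

end EffectAlgebra

/-- If `S ∪ {1}` admits a compatibility support mapping, then `S` is
coexistent: it is contained in the range of an observable defined on some
Boolean algebra. -/
theorem coexistent_of_csm {α : Type u} [DecidableEq α] (E : EffectAlgebra α)
    (S : Set α) (f : Finset α → Finset α → α)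
    (hf : E.IsCSM (S ∪ {E.one}) f) :
    ∃ (B : Type u) (inst : BooleanAlgebra B) (g : B → α),
      @EffectAlgebra.IsObservable α E B inst g ∧ S ⊆ Set.range g :=
  ⟨_, inferInstance, E.observable f (S ∪ {E.one}), hf.isObservable_observable,
    fun _ ha => hf.mem_range_observable (Or.inl ha)⟩
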